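/- Let A be a nonzero d×d complex matrix, v a unit vector, and suppose A^n v = Σ_{i=0}^{n-1} λ_i A^i v with v, Av, ..., A^(n-1)v linearly independent. Then Σ_{i=0}^{n-1} |λ_i| ≤ n·((n+1)!/2)·max(‖A‖_∞, ‖A‖_∞^n). -/

import Mathlib

/-!
The dependence relation says that `p = X ^ n - ∑ λᵢ Xⁱ`, the characteristic polynomial of the
linear recurrence with coefficients `λᵢ`, annihilates `v` under `A`. Because `v, Av, …, Aⁿ⁻¹v`
are independent, every root `z` of `p` is an eigenvalue of `A`: writing `p = (X - z) r`, the
vector `r(A) v` is nonzero and is killed by `A - z`. Hence all roots have modulus at most `‖A‖`,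
and Vieta's formulas bound `|λᵢ| ≤ (n choose i) ‖A‖ⁿ⁻ⁱ`, which is at most
`(n+1)!/2 · max(‖A‖, ‖A‖ⁿ)`.
-/

open Polynomial Finset
open scoped Nat

namespace Nat

theorem choose_le_factorial (n k : ℕ) : n.choose k ≤ n ! := by
  rcases le_or_gt k n with hk | hk
  · exact Nat.le_of_dvd n.factorial_pos
      ⟨k ! * (n - k)!, by rw [← mul_assoc, choose_mul_factorial_mul_factorial hk]⟩
  · simp [choose_eq_zero_of_lt hk]

theorem two_mul_choose_le_factorial_succ {n : ℕ} (hn : 1 ≤ n) (k : ℕ) :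
    2 * n.choose k ≤ (n + 1)! := by
  rw [factorial_succ]
  exact Nat.mul_le_mul (by omega) (choose_le_factorial n k)

end Nat

theorem pow_le_max_self_pow {R : Type*} [Semiring R] [LinearOrder R] [IsStrictOrderedRing R]
    {a : R} (ha : 0 ≤ a) {k n : ℕ} (hk : 1 ≤ k) (hkn : k ≤ n) : a ^ k ≤ max a (a ^ n) := by
  rcases le_total a 1 with ha1 | ha1
  · exact le_max_of_le_left (by simpa using pow_le_pow_of_le_one ha ha1 hk)
  · exact le_max_of_le_right (pow_le_pow_right₀ ha1 hkn)

section Krylov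

variable {R V : Type*} [CommRing R] [AddCommGroup V] [Module R V] {f : Module.End R V} {v : V}
  {n : ℕ}

theorem Polynomial.aeval_apply_eq_sum_fin {q : R[X]} (hq : q.natDegree < n) :
    aeval f q v = ∑ i : Fin n, q.coeff i • (f ^ (i : ℕ)) v := by
  rw [aeval_eq_sum_range' hq, LinearMap.sum_apply,
    ← Fin.sum_univ_eq_sum_range (fun i => (q.coeff i • f ^ i) v)]
  rfl

theorem Polynomial.eq_zero_of_aeval_apply_eq_zero
    (hind : LinearIndependent R fun i : Fin n => (f ^ (i : ℕ)) v) {q : R[X]}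
    (hq : q.natDegree < n) (hqv : aeval f q v = 0) : q = 0 := by
  rw [aeval_apply_eq_sum_fin hq] at hqv
  have hcoeff := Fintype.linearIndependent_iff.mp hind _ hqv
  ext i
  rcases lt_or_ge i n with hi | hi
  · exact hcoeff ⟨i, hi⟩
  · exact coeff_eq_zero_of_natDegree_lt (hq.trans_le hi)

theorem Module.End.hasEigenvalue_of_isRoot_of_linearIndependent [IsDomain R]
    (hind : LinearIndependent R fun i : Fin n => (f ^ (i : ℕ)) v) {p : R[X]} (hp : p ≠ 0)
    (hpn : p.natDegree ≤ n) (hpv : aeval f p v = 0) {z : R} (hz : p.IsRoot z) :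
    f.HasEigenvalue z := by
  set r := p /ₘ (X - C z)
  have hfactor : (X - C z) * r = p := mul_divByMonic_eq_iff_isRoot.mpr hz
  have hr : r ≠ 0 := by rintro hr; simp [← hfactor, hr] at hp
  have hrn : r.natDegree < n := by
    have := congrArg natDegree hfactor
    rw [natDegree_mul (X_sub_C_ne_zero z) hr, natDegree_X_sub_C] at this
    omega
  refine hasEigenvalue_of_hasEigenvector (x := aeval f r v) ⟨?_, ?_⟩
  · rw [mem_eigenspace_iff, ← sub_eq_zero]
    simpa [← hfactor, aeval_X, aeval_C, Module.algebraMap_end_apply, sub_smul] using hpv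
  · exact fun h => hr (eq_zero_of_aeval_apply_eq_zero hind hrn h)

end Krylov

theorem ContinuousLinearMap.norm_le_opNorm_of_hasEigenvalue {𝕜 E : Type*}
    [NontriviallyNormedField 𝕜] [NormedAddCommGroup E] [NormedSpace 𝕜 E] {f : E →L[𝕜] E}
    {μ : 𝕜} (h : Module.End.HasEigenvalue (f : Module.End 𝕜 E) μ) : ‖μ‖ ≤ ‖f‖ := by
  obtain ⟨x, hx⟩ := h.exists_hasEigenvector
  have hfx : f x = μ • x := hx.apply_eq_smul
  refine le_of_mul_le_mul_right ?_ (norm_pos_iff.mpr hx.2)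
  rw [← norm_smul, ← hfx]
  exact f.le_opNorm x

namespace LinearRecurrence

variable {R : Type*} [CommRing R] (E : LinearRecurrence R)

theorem natDegree_charPoly [Nontrivial R] : E.charPoly.natDegree = E.order :=
  natDegree_eq_of_degree_eq_some E.charPoly_degree_eq_order

theorem coeff_charPoly (i : Fin E.order) : E.charPoly.coeff i = -E.coeffs i := by
  rw [charPoly, coeff_sub, coeff_monomial_of_ne _ i.isLt.ne, finsetSum_coeff,
    Finset.sum_eq_single i (fun j _ hji => coeff_monomial_of_ne _ (Fin.val_injective.ne hji.symm))
      (by simp), coeff_monomial_same, zero_sub]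

theorem aeval_charPoly_apply {V : Type*} [AddCommGroup V] [Module R V] (f : Module.End R V)
    (v : V) : aeval f E.charPoly v = (f ^ E.order) v - ∑ i, E.coeffs i • (f ^ (i : ℕ)) v := by
  simp [charPoly, ← C_mul_X_pow_eq_monomial, Module.algebraMap_end_apply]

end LinearRecurrence

theorem LinearRecurrence.norm_coeffs_le (E : LinearRecurrence ℂ) {B : ℝ}
    (h : ∀ z ∈ E.charPoly.roots, ‖z‖ ≤ B) (i : Fin E.order) :
    ‖E.coeffs i‖ ≤ B ^ (E.order - i) * E.order.choose i := by
  simpa [coeff_charPoly, natDegree_charPoly] using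
    coeff_le_of_roots_le (f := RingHom.id ℂ) i E.charPoly_monic (IsAlgClosed.splits _)
      (by simpa using h)

theorem krylov_coeff_bound_general_general
    (d n : ℕ) (A : Matrix (Fin d) (Fin d) ℂ)
    (v : EuclideanSpace ℂ (Fin d))
    (lam : Fin n → ℂ)
    (hdep : (Matrix.toEuclideanCLM (𝕜 := ℂ) A ^ n) v
      = ∑ i : Fin n, lam i • (Matrix.toEuclideanCLM (𝕜 := ℂ) A ^ (i : ℕ)) v)
    (hind : LinearIndependent ℂ
      (fun i : Fin n => (Matrix.toEuclideanCLM (𝕜 := ℂ) A ^ (i : ℕ)) v)) :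
    ∑ i : Fin n, ‖lam i‖
      ≤ n * ((Nat.factorial (n + 1) : ℝ) / 2) *
        max ‖Matrix.toEuclideanCLM (𝕜 := ℂ) A‖ (‖Matrix.toEuclideanCLM (𝕜 := ℂ) A‖ ^ n) := by
  set f := Matrix.toEuclideanCLM (𝕜 := ℂ) A
  set E : LinearRecurrence ℂ := ⟨n, lam⟩
  have hpow (k : ℕ) : ((f : Module.End ℂ _) ^ k) v = (f ^ k) v :=
    (LinearMap.congr_fun (map_pow ContinuousLinearMap.toLinearMapRingHom f k) v).symm
  have hroots (z) (hz : z ∈ E.charPoly.roots) : ‖z‖ ≤ ‖f‖ := by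
    refine ContinuousLinearMap.norm_le_opNorm_of_hasEigenvalue <|
      Module.End.hasEigenvalue_of_isRoot_of_linearIndependent (v := v) (n := n) ?_
        E.charPoly_monic.ne_zero E.natDegree_charPoly.le ?_ (isRoot_of_mem_roots hz)
    · simpa only [hpow] using hind
    · rw [E.aeval_charPoly_apply, sub_eq_zero]
      simpa only [hpow] using hdep
  have hcoeff (i : Fin n) : ‖lam i‖ ≤ (n + 1)! / 2 * max ‖f‖ (‖f‖ ^ n) := by
    have hchoose : (n.choose i : ℝ) ≤ (n + 1)! / 2 := by
      rw [le_div_iff₀ two_pos, mul_comm]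
      exact_mod_cast Nat.two_mul_choose_le_factorial_succ i.pos i
    calc ‖lam i‖ ≤ ‖f‖ ^ (n - i) * n.choose i := E.norm_coeffs_le hroots i
      _ ≤ max ‖f‖ (‖f‖ ^ n) * ((n + 1)! / 2) :=
        mul_le_mul (pow_le_max_self_pow (norm_nonneg f) (by omega) (by omega)) hchoose
          (by positivity) (le_max_of_le_left (norm_nonneg f))
      _ = (n + 1)! / 2 * max ‖f‖ (‖f‖ ^ n) := mul_comm _ _
  calc ∑ i, ‖lam i‖ ≤ ∑ _i : Fin n, (n + 1)! / 2 * max ‖f‖ (‖f‖ ^ n) :=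
        sum_le_sum fun i _ => hcoeff i
    _ = _ := by rw [sum_const, card_univ, Fintype.card_fin, nsmul_eq_mul, mul_assoc]

theorem krylov_coeff_bound_general
    (d n : ℕ) (A : Matrix (Fin d) (Fin d) ℂ) (hA : A ≠ 0)
    (v : EuclideanSpace ℂ (Fin d)) (hv : ‖v‖ = 1)
    (lam : Fin n → ℂ)
    (hdep : (Matrix.toEuclideanCLM (𝕜 := ℂ) A ^ n) v
      = ∑ i : Fin n, lam i • (Matrix.toEuclideanCLM (𝕜 := ℂ) A ^ (i : ℕ)) v)
    (hind : LinearIndependent ℂ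
      (fun i : Fin n => (Matrix.toEuclideanCLM (𝕜 := ℂ) A ^ (i : ℕ)) v)) :
    ∑ i : Fin n, ‖lam i‖
      ≤ n * ((Nat.factorial (n + 1) : ℝ) / 2) *
        max ‖Matrix.toEuclideanCLM (𝕜 := ℂ) A‖ (‖Matrix.toEuclideanCLM (𝕜 := ℂ) A‖ ^ n) :=
  krylov_coeff_bound_general_general d n A v lam hdep hind
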